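/- If e_1 < e_2 (in particular the set S defining e_2 is nonempty), then Case b2) holds. -/

import Mathlib

open MeasureTheory ProbabilityTheory Filter Finset Topology

noncomputable section

attribute [local instance] Classical.propDecidable

/-- The simplex `Λ` of probability vectors on `{1,…,m}`. -/
def Lam (m : ℕ) : Set (Fin m → ℝ) := {l | (∀ i, 0 ≤ l i) ∧ ∑ i, l i = 1}

/-- `f(λ^X, λ^Y) = Σ_i min (p^X_i λ^X_i) (p^Y_i λ^Y_i)`. -/
def fobj {m : ℕ} (pX pY : Fin m → ℝ) (l : (Fin m → ℝ) × (Fin m → ℝ)) : ℝ :=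
  ∑ i, min (pX i * l.1 i) (pY i * l.2 i)

/-- `e_max`, the maximum of `f` over `Λ²`. -/
def emax {m : ℕ} (pX pY : Fin m → ℝ) : ℝ :=
  sSup (fobj pX pY '' (Lam m ×ˢ Lam m))

/-- The set `U`. -/
def Uset {m : ℕ} (pX pY : Fin m → ℝ) : Set (Fin m → ℝ) :=
  {u | (∀ i, 0 ≤ u i) ∧ (∑ i, u i / pX i) ≤ 1 ∧ (∑ i, u i / pY i) ≤ 1}

/-- The set `L_U` of maximizers of `φ(u) = Σ_i u_i` over `U`. -/
def LU {m : ℕ} (pX pY : Fin m → ℝ) : Set (Fin m → ℝ) :=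
  {u ∈ Uset pX pY | ∑ i, u i = emax pX pY}

/-- The set `I` of letters usable in a maximizer. -/
def Iset {m : ℕ} (pX pY : Fin m → ℝ) : Set (Fin m) :=
  {i | ∃ u ∈ LU pX pY, 0 < u i}

/-- Case a): some maximizer saturates the `X` constraint but not the `Y` one. -/
def CaseA {m : ℕ} (pX pY : Fin m → ℝ) : Prop :=
  ∃ u ∈ LU pX pY, (∑ i, u i / pX i) = 1 ∧ (∑ i, u i / pY i) < 1

/-- Case b): every maximizer saturates both constraints. -/
def CaseB {m : ℕ} (pX pY : Fin m → ℝ) : Prop :=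
  ∀ u ∈ LU pX pY, (∑ i, u i / pX i) = 1 ∧ (∑ i, u i / pY i) = 1

/-- Case b1): Case b) and the vectors `(1/p^X_i)_{i∈I}` and `(1/p^Y_i)_{i∈I}` coincide. -/
def CaseB1 {m : ℕ} (pX pY : Fin m → ℝ) : Prop :=
  CaseB pX pY ∧ ∀ i ∈ Iset pX pY, (pX i)⁻¹ = (pY i)⁻¹

/-- Case b2): Case b) and the vectors `(1/p^X_i)_{i∈I}` and `(1/p^Y_i)_{i∈I}` differ. -/
def CaseB2 {m : ℕ} (pX pY : Fin m → ℝ) : Prop :=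
  CaseB pX pY ∧ ¬ (∀ i ∈ Iset pX pY, (pX i)⁻¹ = (pY i)⁻¹)

/-- The set `K_{Λ²}` of maximizers of `f` over `Λ²`. -/
def Kset {m : ℕ} (pX pY : Fin m → ℝ) : Set ((Fin m → ℝ) × (Fin m → ℝ)) :=
  {l ∈ Lam m ×ˢ Lam m | fobj pX pY l = emax pX pY}

/-- `p^X_max`. -/
def pXmax {m : ℕ} (pX : Fin m → ℝ) : ℝ := ⨆ i, pX i

/-- The set `J` (Case a)). -/
def Jset {m : ℕ} (pX pY : Fin m → ℝ) : Set (Fin m → ℝ) :=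
  {l ∈ Lam m | (∀ i ∉ Iset pX pY, l i = 0) ∧
    (∑ i ∈ Finset.univ.filter (· ∈ Iset pX pY), l i / pY i) ≤ 1 / pXmax pX}

/-- `E = {x : Σ_i x_i = 0}`. -/
def Eset (m : ℕ) : Set (Fin m → ℝ) := {x | ∑ i, x i = 0}

/-- `E' = {x ∈ E : x_i ≥ 0 for i ∉ I}`. -/
def E'set {m : ℕ} (pX pY : Fin m → ℝ) : Set (Fin m → ℝ) :=
  {x ∈ Eset m | ∀ i ∉ Iset pX pY, 0 ≤ x i}

/-- The function `𝔪` of Lemma 1.4. -/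
def mfrak {m : ℕ} (pX pY : Fin m → ℝ) (ν : (Fin m → ℝ) × (Fin m → ℝ)) : ℝ :=
  sSup ((fun x : (Fin m → ℝ) × (Fin m → ℝ) =>
      ∑ i, min (pX i * x.1 i + ν.1 i) (pY i * x.2 i + ν.2 i)) ''
    (E'set pX pY ×ˢ E'set pX pY))

/-- Partial sum `λ_1 + … + λ_i`. -/
def psumLe {m : ℕ} (l : Fin m → ℝ) (i : Fin m) : ℝ :=
  ∑ j ∈ Finset.univ.filter (· ≤ i), l j

/-- Partial sum `λ_1 + … + λ_{i-1}`. -/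
def psumLt {m : ℕ} (l : Fin m → ℝ) (i : Fin m) : ℝ :=
  ∑ j ∈ Finset.univ.filter (· < i), l j

/-- `e(i,j)`. -/
def eij {m : ℕ} (pX pY : Fin m → ℝ) (i j : Fin m) : ℝ :=
  (pX i * pY i * (pX j - pY j) + pX j * pY j * (pY i - pX i)) /
    (pY i * pX j - pX i * pY j)

/-- The set `S` of admissible pairs `(i,j)` in the representation of `e_max`. -/
def Sset {m : ℕ} (pX pY : Fin m → ℝ) : Set (Fin m × Fin m) :=
  {ij | pX ij.1 < pX ij.2 ∧ pY ij.2 < pY ij.1 ∧ pX ij.1 < pY ij.1 ∧ pY ij.2 < pX ij.2}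

/-- `e_1 = max_i min(p^X_i, p^Y_i)`. -/
def e1 {m : ℕ} (pX pY : Fin m → ℝ) : ℝ := ⨆ i, min (pX i) (pY i)

/-- `e_2 = max_{(i,j)∈S} e(i,j)` (with `sSup ∅ = 0` when `S` is empty). -/
def e2 {m : ℕ} (pX pY : Fin m → ℝ) : ℝ :=
  sSup ((fun ij : Fin m × Fin m => eij pX pY ij.1 ij.2) '' Sset pX pY)


/-!
`e_max` is the value of the linear program "maximise `∑ u` over `U`": a point of `U` lifts to a
pair in `Λ²` on which `f` is at least `∑ u`, and `i ↦ min (p^X_i λ^X_i) (p^Y_i λ^Y_i)` maps `Λ²`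
back into `U`. The point of `U` supported on a pair `(i, j) ∈ S` with both budgets tight has value
`e(i, j)`, so `e_1 < e_2 ≤ e_max`.

If a maximiser `u` leaves slack in the budget `∑ u_i / p_i ≤ 1`, then by convexity it also
maximises `∑ u` under the other budget `∑ u_i / q_i ≤ 1` alone. That program has value `max q`
and its maximisers live where `q` is maximal; as the `p`-budget is slack, one of those letters has
`p_i > q_i = e_max`, so `e_max ≤ min (p^X_i, p^Y_i) ≤ e_1`. Hence Case b) holds.

In Case b) a maximiser has `∑ u_i / p^X_i = 1`, so `e_max = ∑ u_i` is an average of the `p^X_k`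
over the support of `u`: some `k ∈ I` has `p^X_k ≥ e_max > e_1 ≥ min (p^X_k, p^Y_k)`, so
`p^X_k ≠ p^Y_k`.
-/

section Budget

variable {ι : Type*} [Fintype ι] {p q u : ι → ℝ} {M : ℝ}

lemma exists_pos_sum_le_of_sum_div_eq_one (hp : ∀ i, 0 < p i) (hu : ∀ i, 0 ≤ u i)
    (h : ∑ i, u i / p i = 1) : ∃ k, 0 < u k ∧ ∑ i, u i ≤ p k := by
  by_contra! hlt
  obtain ⟨k, hk⟩ : ∃ k, 0 < u k := by
    by_contra! hle
    simp [fun i => le_antisymm (hle i) (hu i)] at h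
  have hterm : ∀ i, u i ≤ u i / p i * ∑ j, u j := fun i => by
    rcases (hu i).eq_or_lt with h0 | hpos
    · simp [← h0]
    · calc u i = u i / p i * p i := (div_mul_cancel₀ _ (hp i).ne').symm
        _ ≤ u i / p i * ∑ j, u j :=
          mul_le_mul_of_nonneg_left (hlt i hpos).le (div_nonneg (hu i) (hp i).le)
  have : ∑ i, u i < ∑ i, u i / p i * ∑ j, u j := by
    refine Finset.sum_lt_sum (fun i _ => hterm i) ⟨k, Finset.mem_univ k, ?_⟩
    calc u k = u k / p k * p k := (div_mul_cancel₀ _ (hp k).ne').symm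
      _ < u k / p k * ∑ j, u j := mul_lt_mul_of_pos_left (hlt k hk) (div_pos hk (hp k))
  rw [← Finset.sum_mul, h, one_mul] at this
  exact this.false

lemma sum_convex_comb_div (r v : ι → ℝ) (t : ℝ) :
    ∑ i, ((1 - t) * u i + t * v i) / r i = (1 - t) * ∑ i, u i / r i + t * ∑ i, v i / r i := by
  simp only [add_div, mul_div_assoc, Finset.sum_add_distrib, Finset.mul_sum]

-- A small step from `u` towards `v` stays within both budgets, thanks to the slack in the first.
lemma sum_le_of_maximizer_of_slack (hp : ∀ i, 0 < p i) (hup : ∑ i, u i / p i < 1)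
    (huq : ∑ i, u i / q i ≤ 1) (hu0 : ∀ i, 0 ≤ u i) (husum : ∑ i, u i = M)
    (hmax : ∀ v : ι → ℝ, (∀ i, 0 ≤ v i) → ∑ i, v i / p i ≤ 1 → ∑ i, v i / q i ≤ 1 →
      ∑ i, v i ≤ M)
    {v : ι → ℝ} (hv0 : ∀ i, 0 ≤ v i) (hvq : ∑ i, v i / q i ≤ 1) : ∑ i, v i ≤ M := by
  set A := ∑ i, u i / p i
  set B := ∑ i, v i / p i
  have hB : 0 ≤ B := Finset.sum_nonneg fun i _ => div_nonneg (hv0 i) (hp i).le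
  -- with this step size, `(1 - t) A + t B = B / (1 - A + B) ≤ 1`
  set t := (1 - A) / (1 - A + B)
  have ht0 : 0 < t := div_pos (by linarith) (by linarith)
  have ht1 : t ≤ 1 := (div_le_one (by linarith)).2 (by linarith)
  have hwp : (1 - t) * A + t * B ≤ 1 := by
    have : t * (1 - A + B) = 1 - A := div_mul_cancel₀ _ (by linarith)
    nlinarith
  have hw := hmax (fun i => (1 - t) * u i + t * v i)
    (fun i => add_nonneg (mul_nonneg (by linarith) (hu0 i)) (mul_nonneg ht0.le (hv0 i)))
    (by rw [sum_convex_comb_div]; exact hwp)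
    (by rw [sum_convex_comb_div]; nlinarith)
  rw [Finset.sum_add_distrib, ← Finset.mul_sum, ← Finset.mul_sum, husum] at hw
  nlinarith

lemma exists_le_min_of_maximizer_of_slack [Nonempty ι] (hp : ∀ i, 0 < p i) (hq : ∀ i, 0 < q i)
    (hup : ∑ i, u i / p i < 1) (huq : ∑ i, u i / q i ≤ 1)
    (hu0 : ∀ i, 0 ≤ u i) (husum : ∑ i, u i = M)
    (hmax : ∀ v : ι → ℝ, (∀ i, 0 ≤ v i) → ∑ i, v i / p i ≤ 1 → ∑ i, v i / q i ≤ 1 →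
      ∑ i, v i ≤ M) :
    ∃ i, M ≤ min (p i) (q i) := by
  classical
  have hqM : ∀ k, q k ≤ M := fun k => by
    simpa using sum_le_of_maximizer_of_slack hp hup huq hu0 husum hmax
      (v := Pi.single k (q k)) (fun i => by by_cases h : i = k <;> simp [h, (hq k).le])
      (by simp [Pi.single_apply, ite_div, (hq k).ne'])
  have hM : 0 < M := (hq (Classical.arbitrary ι)).trans_le (hqM _)
  have hterm : ∀ i ∈ Finset.univ, u i ≤ u i / q i * M := fun i _ =>
    calc u i = u i / q i * q i := (div_mul_cancel₀ _ (hq i).ne').symm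
      _ ≤ u i / q i * M := mul_le_mul_of_nonneg_left (hqM i) (div_nonneg (hu0 i) (hq i).le)
  have hsum : M ≤ (∑ i, u i / q i) * M := by
    rw [Finset.sum_mul]; exact husum.symm.trans_le (Finset.sum_le_sum hterm)
  have hq1 : ∑ i, u i / q i = 1 :=
    le_antisymm huq (le_of_mul_le_mul_right (by linarith) hM)
  have heq : ∀ i ∈ Finset.univ, u i = u i / q i * M := by
    rw [← Finset.sum_eq_sum_iff_of_le hterm, ← Finset.sum_mul, hq1, one_mul, husum]
  obtain ⟨i, -, hi⟩ := Finset.exists_lt_of_sum_lt (hup.trans_eq hq1.symm)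
  have hui : 0 < u i := (hu0 i).lt_of_ne fun h => by simp [← h] at hi
  have hqp : q i < p i := by
    by_contra! h
    exact hi.not_ge (div_le_div_of_nonneg_left (hu0 i) (hp i) h)
  have hqi : q i = M := by
    have := heq i (Finset.mem_univ i)
    rw [div_mul_eq_mul_div, eq_div_iff (hq i).ne'] at this
    exact mul_left_cancel₀ hui.ne' this
  exact ⟨i, by rw [min_eq_right hqp.le, hqi]⟩

end Budget

section Maximizers

variable {m : ℕ} {pX pY : Fin m → ℝ}

lemma Lam_eq_stdSimplex (m : ℕ) : Lam m = stdSimplex ℝ (Fin m) := rfl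

lemma continuous_fobj (pX pY : Fin m → ℝ) : Continuous (fobj pX pY) := by
  unfold fobj; fun_prop

lemma isCompact_image_fobj (pX pY : Fin m → ℝ) :
    IsCompact (fobj pX pY '' (Lam m ×ˢ Lam m)) := by
  rw [Lam_eq_stdSimplex]
  exact ((isCompact_stdSimplex ℝ _).prod (isCompact_stdSimplex ℝ _)).image (continuous_fobj pX pY)

lemma fobj_le_emax {l : (Fin m → ℝ) × (Fin m → ℝ)} (hl : l ∈ Lam m ×ˢ Lam m) :
    fobj pX pY l ≤ emax pX pY :=
  le_csSup (isCompact_image_fobj pX pY).bddAbove ⟨l, hl, rfl⟩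

lemma exists_fobj_eq_emax [NeZero m] (pX pY : Fin m → ℝ) :
    ∃ l ∈ Lam m ×ˢ Lam m, fobj pX pY l = emax pX pY :=
  (isCompact_image_fobj pX pY).sSup_mem
    ⟨_, (Pi.single 0 1, Pi.single 0 1), ⟨single_mem_stdSimplex ℝ 0, single_mem_stdSimplex ℝ 0⟩, rfl⟩

lemma exists_mem_Lam_le_mul [NeZero m] {p u : Fin m → ℝ} (hp : ∀ i, 0 < p i)
    (hu : ∀ i, 0 ≤ u i) (h : ∑ i, u i / p i ≤ 1) : ∃ l ∈ Lam m, ∀ i, u i ≤ p i * l i := by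
  -- spend the unused budget on the letter `0`
  set slack : Fin m → ℝ := Pi.single 0 (1 - ∑ i, u i / p i)
  have hslack : ∀ i, 0 ≤ slack i := fun i => by
    by_cases hi : i = 0 <;> simp [slack, hi, h]
  refine ⟨fun i => u i / p i + slack i,
    ⟨fun i => add_nonneg (div_nonneg (hu i) (hp i).le) (hslack i), ?_⟩, fun i => ?_⟩
  · simp [slack, Finset.sum_add_distrib]
  · rw [mul_add, mul_div_cancel₀ _ (hp i).ne']
    exact le_add_of_nonneg_right (mul_nonneg (hp i).le (hslack i))

lemma sum_le_emax [NeZero m] (hpX : ∀ i, 0 < pX i) (hpY : ∀ i, 0 < pY i) {u : Fin m → ℝ}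
    (hu : u ∈ Uset pX pY) : ∑ i, u i ≤ emax pX pY := by
  obtain ⟨hu0, huX, huY⟩ := hu
  obtain ⟨lX, hlX, hleX⟩ := exists_mem_Lam_le_mul hpX hu0 huX
  obtain ⟨lY, hlY, hleY⟩ := exists_mem_Lam_le_mul hpY hu0 huY
  exact (Finset.sum_le_sum fun i _ => le_min (hleX i) (hleY i)).trans
    (fobj_le_emax (l := (lX, lY)) ⟨hlX, hlY⟩)

lemma min_mem_Uset (hpX : ∀ i, 0 < pX i) (hpY : ∀ i, 0 < pY i)
    {l : (Fin m → ℝ) × (Fin m → ℝ)} (hl : l ∈ Lam m ×ˢ Lam m) :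
    (fun i => min (pX i * l.1 i) (pY i * l.2 i)) ∈ Uset pX pY := by
  obtain ⟨⟨hl10, hl1⟩, hl20, hl2⟩ := hl
  refine ⟨fun i => le_min (mul_nonneg (hpX i).le (hl10 i)) (mul_nonneg (hpY i).le (hl20 i)),
    ?_, ?_⟩
  · refine le_of_le_of_eq (Finset.sum_le_sum fun i _ => ?_) hl1
    rw [div_le_iff₀ (hpX i), mul_comm]
    exact min_le_left _ _
  · refine le_of_le_of_eq (Finset.sum_le_sum fun i _ => ?_) hl2
    rw [div_le_iff₀ (hpY i), mul_comm]
    exact min_le_right _ _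

lemma LU_nonempty [NeZero m] (hpX : ∀ i, 0 < pX i) (hpY : ∀ i, 0 < pY i) :
    (LU pX pY).Nonempty := by
  obtain ⟨l, hl, hfl⟩ := exists_fobj_eq_emax pX pY
  exact ⟨_, min_mem_Uset hpX hpY hl, hfl⟩

end Maximizers

section Criterion

variable {m : ℕ} {pX pY : Fin m → ℝ}

lemma min_le_e1 (pX pY : Fin m → ℝ) (i : Fin m) : min (pX i) (pY i) ≤ e1 pX pY :=
  le_ciSup (f := fun k => min (pX k) (pY k)) (Set.finite_range _).bddAbove i

lemma eij_le_emax [NeZero m] (hpX : ∀ i, 0 < pX i) (hpY : ∀ i, 0 < pY i) {i j : Fin m}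
    (hij : (i, j) ∈ Sset pX pY) : eij pX pY i j ≤ emax pX pY := by
  obtain ⟨h1, h2, h3, h4⟩ : pX i < pX j ∧ pY j < pY i ∧ pX i < pY i ∧ pY j < pX j := hij
  set D := pY i * pX j - pX i * pY j
  have hD : 0 < D := by nlinarith [hpX i, hpY j]
  set a := pX i * pY i * (pX j - pY j) / D
  set b := pX j * pY j * (pY i - pX i) / D
  -- the point of `U` supported on `{i, j}` where both budgets are tight
  set u : Fin m → ℝ := Pi.single i a + Pi.single j b
  have hsum : ∀ r : Fin m → ℝ, ∑ k, u k / r k = a / r i + b / r j := fun r => by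
    simp [u, add_div, Finset.sum_add_distrib, Pi.single_apply, ite_div]
  have hmem : u ∈ Uset pX pY := by
    have ha : 0 ≤ a := div_nonneg (by nlinarith [mul_pos (hpX i) (hpY i)]) hD.le
    have hb : 0 ≤ b := div_nonneg (by nlinarith [mul_pos (hpX j) (hpY j)]) hD.le
    refine ⟨fun k => add_nonneg ?_ ?_, le_of_eq ?_, le_of_eq ?_⟩
    · by_cases hk : k = i <;> simp [hk, ha]
    · by_cases hk : k = j <;> simp [hk, hb]
    all_goals
      rw [hsum]
      have hD0 := hD.ne'
      simp only [a, b, D] at hD0 ⊢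
      field_simp [(hpX i).ne', (hpX j).ne', (hpY i).ne', (hpY j).ne']
      ring
  calc eij pX pY i j = ∑ k, u k := by
        simp [u, Finset.sum_add_distrib, a, b, eij, D, add_div]
    _ ≤ emax pX pY := sum_le_emax hpX hpY hmem

lemma e2_le_emax [NeZero m] (hpX : ∀ i, 0 < pX i) (hpY : ∀ i, 0 < pY i)
    (hS : (Sset pX pY).Nonempty) : e2 pX pY ≤ emax pX pY :=
  csSup_le (hS.image _) fun _ ⟨_, hij, he⟩ => he ▸ eij_le_emax hpX hpY hij

lemma caseB_of_e1_lt_emax [NeZero m] (hpX : ∀ i, 0 < pX i) (hpY : ∀ i, 0 < pY i)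
    (h : e1 pX pY < emax pX pY) : CaseB pX pY := by
  rintro u ⟨⟨hu0, huX, huY⟩, husum⟩
  have hmax : ∀ v : Fin m → ℝ, (∀ i, 0 ≤ v i) → ∑ i, v i / pX i ≤ 1 → ∑ i, v i / pY i ≤ 1 →
      ∑ i, v i ≤ emax pX pY := fun v h0 hX hY => sum_le_emax hpX hpY ⟨h0, hX, hY⟩
  have hlt : ∀ i, min (pX i) (pY i) < emax pX pY := fun i => (min_le_e1 pX pY i).trans_lt h
  constructor
  · by_contra hne
    obtain ⟨i, hi⟩ := exists_le_min_of_maximizer_of_slack hpX hpY (huX.lt_of_ne hne) huY hu0 husum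
      hmax
    exact (hlt i).not_ge hi
  · by_contra hne
    obtain ⟨i, hi⟩ := exists_le_min_of_maximizer_of_slack hpY hpX (huY.lt_of_ne hne) huX hu0 husum
      fun v h0 hY hX => hmax v h0 hX hY
    exact (hlt i).not_ge (min_comm (pX i) _ ▸ hi)

lemma exists_mem_Iset_ne_of_e1_lt_emax [NeZero m] (hpX : ∀ i, 0 < pX i) (hpY : ∀ i, 0 < pY i)
    (h : e1 pX pY < emax pX pY) (hB : CaseB pX pY) :
    ∃ k ∈ Iset pX pY, pX k ≠ pY k := by
  obtain ⟨u, hu⟩ := LU_nonempty hpX hpY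
  obtain ⟨k, hk, hkX⟩ := exists_pos_sum_le_of_sum_div_eq_one hpX hu.1.1 (hB u hu).1
  refine ⟨k, ⟨u, hu, hk⟩, fun hXY => ?_⟩
  have := min_le_e1 pX pY k
  rw [← hXY, min_self] at this
  linarith [hu.2]

end Criterion

theorem criterion_e1_lt_e2_general
    (m : ℕ)
    (pX pY : Fin m → ℝ)
    (hpX : ∀ i, 0 < pX i) (hpY : ∀ i, 0 < pY i)
    (hS : (Sset pX pY).Nonempty)
    (hlt : e1 pX pY < e2 pX pY) :
    CaseB2 pX pY := by
  have : NeZero m := ⟨(Fin.pos hS.some.1).ne'⟩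
  have h := hlt.trans_le (e2_le_emax hpX hpY hS)
  have hB := caseB_of_e1_lt_emax hpX hpY h
  obtain ⟨k, hk, hne⟩ := exists_mem_Iset_ne_of_e1_lt_emax hpX hpY h hB
  exact ⟨hB, fun hall => hne (inv_injective (hall k hk))⟩

/-- Criterion: if `S` is nonempty and `e_1 < e_2`, then Case b2) holds. -/
theorem criterion_e1_lt_e2
    (m : ℕ) (hm : 2 ≤ m)
    (pX pY : Fin m → ℝ)
    (hpX : ∀ i, 0 < pX i) (hpY : ∀ i, 0 < pY i)
    (hpXsum : ∑ i, pX i = 1) (hpYsum : ∑ i, pY i = 1)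
    (hS : (Sset pX pY).Nonempty)
    (hlt : e1 pX pY < e2 pX pY) :
    CaseB2 pX pY :=
  criterion_e1_lt_e2_general m pX pY hpX hpY hS hlt

end
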